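/- arXiv:2101.11947 — 2 statements merged into one kernel-verified Lean document; each statement's English description precedes it below -/
import Mathlib

section
/- Let n, k, d, s be integers with n ≥ d ≥ 1 and k > s ≥ 0. Then g(n,k,d;s) ≥ 2^d·k − ⌊(k−s) / 2^(n−d)⌋. -/
open scoped Classical

noncomputable section

abbrev F2 : Type := ZMod 2

/-- Number of members of the multiset `H` (counted with multiplicity) containing `x`. -/
def covCount (n : ℕ) (H : Multiset (AffineSubspace F2 (Fin n → F2))) (x : Fin n → F2) : ℕ :=
  Multiset.countP (fun S => x ∈ S) H

/-- `H` is a (k,d)-cover of 𝔽₂ⁿ: a multiset of (n-d)-dimensional affine subspaces covering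
every nonzero point at least `k` times and the origin at most `k-1` times. -/
def IsCover (n k d : ℕ) (H : Multiset (AffineSubspace F2 (Fin n → F2))) : Prop :=
  (∀ S ∈ H, (S : Set (Fin n → F2)).Nonempty ∧ Module.finrank F2 S.direction = n - d) ∧
  (∀ x : Fin n → F2, x ≠ 0 → k ≤ covCount n H x) ∧
  covCount n H 0 < k

/-- `H` is a (k,d;s)-cover of 𝔽₂ⁿ: a (k,d)-cover in which the origin lies in exactly `s`
members (counted with multiplicity). -/
def IsCoverExact (n k d s : ℕ) (H : Multiset (AffineSubspace F2 (Fin n → F2))) : Prop :=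
  (∀ S ∈ H, (S : Set (Fin n → F2)).Nonempty ∧ Module.finrank F2 S.direction = n - d) ∧
  (∀ x : Fin n → F2, x ≠ 0 → k ≤ covCount n H x) ∧
  covCount n H 0 = s

/-- Minimum cardinality of a (k,d)-cover of 𝔽₂ⁿ. -/
def f (n k d : ℕ) : ℕ := sInf {m | ∃ H, IsCover n k d H ∧ Multiset.card H = m}

/-- Minimum cardinality of a (k,d;s)-cover of 𝔽₂ⁿ. -/
def g (n k d s : ℕ) : ℕ := sInf {m | ∃ H, IsCoverExact n k d s H ∧ Multiset.card H = m}

end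

/-! Double counting: each member of a (k,d;s)-cover has `2^(n-d)` points, and the incidences
between points and members number at least `s + (2^n - 1) k`, so
`|H| 2^(n-d) ≥ s + (2^n - 1) k`, which rearranges to the bound. As `g` is an `sInf` (which is `0`
on the empty set), a cover must also exist: `s` copies of a subspace through `0` together with,
for each `x ≠ 0`, `k` copies of a coset through `x` that misses `0`. -/

open Finset Module

theorem Multiset.sum_countP_eq_sum_map_card {α β : Type*} [Fintype α] (r : α → β → Prop)
    [DecidableRel r] (H : Multiset β) :
    ∑ a, H.countP (r a) = (H.map fun b => #{a | r a b}).sum := by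
  induction H using Multiset.induction_on with
  | empty => simp
  | cons b H ih =>
    simp [Multiset.countP_cons, Finset.sum_add_distrib, ih, Finset.sum_boole, add_comm]

theorem AffineSubspace.natCard_eq_pow_finrank {K V P : Type*} [DivisionRing K] [AddCommGroup V]
    [Module K V] [Module.Finite K V] [AddTorsor V P] (S : AffineSubspace K P)
    (hS : (S : Set P).Nonempty) :
    Nat.card S = Nat.card K ^ finrank K S.direction := by
  have : Nonempty S := hS.to_subtype
  rw [← Nat.card_congr (Equiv.vaddConst (Classical.arbitrary S)),
    Module.natCard_eq_pow_finrank (K := K)]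

theorem Submodule.exists_le_finrank_eq {K V : Type*} [DivisionRing K] [AddCommGroup V]
    [Module K V] (p : Submodule K V) {r : ℕ} (hr : r ≤ finrank K p) :
    ∃ U ≤ p, finrank K U = r := by
  obtain ⟨f, hf⟩ := exists_linearIndependent_of_le_finrank hr
  refine ⟨span K (Set.range (p.subtype ∘ f)), ?_, ?_⟩
  · rw [span_le]
    rintro _ ⟨i, rfl⟩
    exact (f i).2
  · rw [finrank_span_eq_card (hf.map' p.subtype p.ker_subtype), Fintype.card_fin]

theorem Submodule.exists_finrank_eq_notMem {K V : Type*} [DivisionRing K] [AddCommGroup V]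
    [Module K V] [FiniteDimensional K V] {x : V} (hx : x ≠ 0) {r : ℕ} (hr : r < finrank K V) :
    ∃ U : Submodule K V, finrank K U = r ∧ x ∉ U := by
  obtain ⟨W, hW⟩ := (K ∙ x).exists_isCompl
  have hWrank : finrank K W + 1 = finrank K V := by
    rw [← finrank_add_eq_of_isCompl hW, finrank_span_singleton hx, add_comm]
  obtain ⟨U, hUW, hU⟩ := W.exists_le_finrank_eq (r := r) (by omega)
  exact ⟨U, hU, fun hxU => (disjoint_span_singleton' hx).1 hW.disjoint.symm (hUW hxU)⟩

theorem Nat.sub_div_le_of_add_mul_le {a b k s m : ℕ} (hb : 0 < b)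
    (h : s + (a * b - 1) * k ≤ m * b) : a * k - (k - s) / b ≤ m := by
  by_cases ham : a * k ≤ m
  · exact (Nat.sub_le _ _).trans ham
  have hab : 0 < a * b := Nat.mul_pos (Nat.pos_of_ne_zero (by rintro rfl; omega)) hb
  have key : (a * k - m) * b ≤ k - s := by
    have e1 : (a * k - m) * b = a * b * k - m * b := by rw [Nat.sub_mul]; ring_nf
    have e2 : (a * b - 1) * k = a * b * k - k := Nat.sub_one_mul _ _
    have hk : k ≤ a * b * k := Nat.le_mul_of_pos_left k hab
    omega
  have := (Nat.le_div_iff_mul_le hb).2 key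
  omega

section Cover

variable {n k d s : ℕ} {H : Multiset (AffineSubspace F2 (Fin n → F2))}

theorem sum_covCount_eq (hdim : ∀ S ∈ H, (S : Set (Fin n → F2)).Nonempty ∧
      finrank F2 S.direction = n - d) :
    ∑ x, covCount n H x = Multiset.card H * 2 ^ (n - d) := by
  have hcard : ∀ S ∈ H, #{x | x ∈ S} = 2 ^ (n - d) := fun S hS => by
    rw [← Fintype.card_subtype, ← Nat.card_eq_fintype_card,
      S.natCard_eq_pow_finrank (hdim S hS).1, (hdim S hS).2, Nat.card_zmod]
  unfold covCount
  rw [Multiset.sum_countP_eq_sum_map_card (fun x S => x ∈ S),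
    Multiset.map_congr rfl hcard, Multiset.map_const', Multiset.sum_replicate, smul_eq_mul]

theorem IsCoverExact.add_mul_le (hH : IsCoverExact n k d s H) :
    s + (2 ^ n - 1) * k ≤ Multiset.card H * 2 ^ (n - d) := by
  obtain ⟨hdim, hcov, h0⟩ := hH
  have hnonzero : #(univ.erase (0 : Fin n → F2)) = 2 ^ n - 1 := by
    rw [card_erase_of_mem (mem_univ _), card_univ, Fintype.card_fun, ZMod.card, Fintype.card_fin]
  calc s + (2 ^ n - 1) * k
      ≤ covCount n H 0 + ∑ x ∈ univ.erase 0, covCount n H x := by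
        rw [h0, ← hnonzero]
        gcongr
        exact card_nsmul_le_sum _ _ _ fun x hx => hcov x (ne_of_mem_erase hx)
    _ = Multiset.card H * 2 ^ (n - d) := by
        rw [add_sum_erase _ _ (mem_univ _), sum_covCount_eq hdim]

theorem IsCoverExact.le_card (hdn : d ≤ n) (hH : IsCoverExact n k d s H) :
    2 ^ d * k - (k - s) / 2 ^ (n - d) ≤ Multiset.card H :=
  Nat.sub_div_le_of_add_mul_le (by positivity) <| by
    rw [← pow_add, Nat.add_sub_cancel' hdn]
    exact hH.add_mul_le

end Cover

theorem exists_isCoverExact (n k d s : ℕ) (hd : 1 ≤ d) (hdn : d ≤ n) :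
    ∃ H, IsCoverExact n k d s H := by
  have hrank : n - d < finrank F2 (Fin n → F2) := by rw [Module.finrank_fin_fun]; omega
  obtain ⟨U₀, -, hU₀⟩ := (⊤ : Submodule F2 (Fin n → F2)).exists_le_finrank_eq (r := n - d)
    (by rw [finrank_top]; exact hrank.le)
  choose U hU hxU using fun x : {x : Fin n → F2 // x ≠ 0} =>
    Submodule.exists_finrank_eq_notMem x.2 hrank
  let T (x : {x : Fin n → F2 // x ≠ 0}) := AffineSubspace.mk' (x : Fin n → F2) (U x)
  have zero_notMem_T (x : {x : Fin n → F2 // x ≠ 0}) : (0 : Fin n → F2) ∉ T x := by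
    simpa [T, AffineSubspace.mem_mk'] using hxU x
  refine ⟨Multiset.replicate s (AffineSubspace.mk' 0 U₀) + k • univ.val.map T, ?_, ?_, ?_⟩
  · intro S hS
    rcases Multiset.mem_add.1 hS with h | h
    · rw [Multiset.eq_of_mem_replicate h]
      exact ⟨⟨0, AffineSubspace.self_mem_mk' _ _⟩, by rw [AffineSubspace.direction_mk', hU₀]⟩
    · obtain ⟨x, -, rfl⟩ := Multiset.mem_map.1 (Multiset.mem_of_mem_nsmul h)
      exact ⟨⟨x, AffineSubspace.self_mem_mk' _ _⟩, by rw [AffineSubspace.direction_mk', hU x]⟩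
  · intro x hx
    have hpos : 0 < (univ.val.map T).countP (fun S => x ∈ S) :=
      Multiset.countP_pos.2 ⟨T ⟨x, hx⟩, Multiset.mem_map_of_mem _ (mem_univ _),
        AffineSubspace.self_mem_mk' _ _⟩
    simp only [covCount, Multiset.countP_add, Multiset.countP_nsmul]
    nlinarith
  · have hT : (univ.val.map T).countP (fun S => (0 : Fin n → F2) ∈ S) = 0 := by
      rw [Multiset.countP_eq_zero]
      rintro _ hS
      obtain ⟨x, -, rfl⟩ := Multiset.mem_map.1 hS
      exact zero_notMem_T x
    have hreplicate : (Multiset.replicate s (AffineSubspace.mk' 0 U₀)).countP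
        (fun S => (0 : Fin n → F2) ∈ S) = s := by
      rw [Multiset.countP_eq_card.2, Multiset.card_replicate]
      intro S hS
      exact Multiset.eq_of_mem_replicate hS ▸ AffineSubspace.self_mem_mk' _ _
    simp only [covCount, Multiset.countP_add, Multiset.countP_nsmul, hT, hreplicate]
    ring

theorem stmt3_general (n k d s : ℕ) (hd : 1 ≤ d) (hdn : d ≤ n) :
    2 ^ d * k - (k - s) / 2 ^ (n - d) ≤ g n k d s := by
  obtain ⟨H₀, hH₀⟩ := exists_isCoverExact n k d s hd hdn
  refine le_csInf ⟨_, H₀, hH₀, rfl⟩ ?_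
  rintro _ ⟨H, hH, rfl⟩
  exact hH.le_card hdn

theorem stmt3 (n k d s : ℕ) (hd : 1 ≤ d) (hdn : d ≤ n) (hs : s < k) :
    2 ^ d * k - (k - s) / 2 ^ (n - d) ≤ g n k d s :=
  stmt3_general n k d s hd hdn
end

section
/- Let n, k, d, s be integers with n ≥ d ≥ 2 and k > s ≥ 0. Then g(n,k,d;s) ≤ g(n−d+1,k,1;s) + 2k·(2^(d−1) − 1). -/
open scoped Classical

/-!
Write `ψ : 𝔽₂ⁿ → 𝔽₂^(d-1)` for the restriction to `d - 1` coordinates. Its kernel is a copy of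
`𝔽₂^(n-d+1)`, and embedding an optimal `(k,1;s)`-cover of that space turns its hyperplanes into
`(n-d)`-flats of `𝔽₂ⁿ` covering the nonzero points of `ker ψ` and the origin exactly as before.
Every point outside `ker ψ` is then covered `k` times by the fibres of `Φ = (ℓ, ψ) : 𝔽₂ⁿ → 𝔽₂ × 𝔽₂^(d-1)`
(for one further coordinate `ℓ`) over the `2 (2^(d-1) - 1)` values with nonzero second component:
these fibres are `(n-d)`-flats avoiding the origin.
-/

open Function Module

lemma covCount_add {n : ℕ} (H₁ H₂ : Multiset (AffineSubspace F2 (Fin n → F2))) (x : Fin n → F2) :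
    covCount n (H₁ + H₂) x = covCount n H₁ x + covCount n H₂ x :=
  Multiset.countP_add _ _ _

lemma covCount_replicate {n : ℕ} (k : ℕ) (S : AffineSubspace F2 (Fin n → F2)) (x : Fin n → F2) :
    covCount n (Multiset.replicate k S) x = if x ∈ S then k else 0 := by
  unfold covCount
  split_ifs with h
  · rw [Multiset.countP_eq_card.mpr fun T hT => Multiset.eq_of_mem_replicate hT ▸ h,
      Multiset.card_replicate]
  · exact Multiset.countP_eq_zero.mpr fun T hT => Multiset.eq_of_mem_replicate hT ▸ h

lemma covCount_sum {n : ℕ} {ι : Type*} (T : Finset ι)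
    (H : ι → Multiset (AffineSubspace F2 (Fin n → F2))) (x : Fin n → F2) :
    covCount n (∑ i ∈ T, H i) x = ∑ i ∈ T, covCount n (H i) x :=
  map_sum (Multiset.countPAddMonoidHom _) _ _

section Fibre

variable {n : ℕ} {M : Type*} [AddCommGroup M] [Module F2 M]
  {Φ : (Fin n → F2) →ₗ[F2] M} (hΦ : Surjective Φ)

noncomputable def fibre (w : M) : AffineSubspace F2 (Fin n → F2) :=
  AffineSubspace.mk' (surjInv hΦ w) (LinearMap.ker Φ)

lemma mem_fibre {w : M} {x : Fin n → F2} : x ∈ fibre hΦ w ↔ Φ x = w := by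
  rw [fibre, AffineSubspace.mem_mk', vsub_eq_sub, LinearMap.mem_ker, map_sub, sub_eq_zero,
    surjInv_eq hΦ]

lemma fibre_nonempty (w : M) : (fibre hΦ w : Set (Fin n → F2)).Nonempty :=
  ⟨_, AffineSubspace.self_mem_mk' _ _⟩

lemma finrank_direction_fibre [FiniteDimensional F2 M] (w : M) :
    finrank F2 (fibre hΦ w).direction = n - finrank F2 M := by
  have h := LinearMap.finrank_range_add_finrank_ker Φ
  rw [LinearMap.range_eq_top.mpr hΦ, finrank_top, finrank_fin_fun] at h
  rw [fibre, AffineSubspace.direction_mk']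
  omega

noncomputable def fibreCover (k : ℕ) (T : Finset M) : Multiset (AffineSubspace F2 (Fin n → F2)) :=
  ∑ w ∈ T, Multiset.replicate k (fibre hΦ w)

lemma covCount_fibreCover (k : ℕ) (T : Finset M) (x : Fin n → F2) :
    covCount n (fibreCover hΦ k T) x = if Φ x ∈ T then k else 0 := by
  simp only [fibreCover, covCount_sum, covCount_replicate, mem_fibre, Finset.sum_ite_eq]

lemma card_fibreCover (k : ℕ) (T : Finset M) :
    Multiset.card (fibreCover hΦ k T) = T.card * k := by
  simp [fibreCover, Multiset.card_sum]

lemma mem_fibreCover {k : ℕ} {T : Finset M} {S : AffineSubspace F2 (Fin n → F2)}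
    (hS : S ∈ fibreCover hΦ k T) : ∃ w, S = fibre hΦ w := by
  obtain ⟨w, -, hw⟩ := Multiset.mem_sum.mp hS
  exact ⟨w, Multiset.eq_of_mem_replicate hw⟩

end Fibre

section Lift

variable {m n : ℕ} {ι : (Fin m → F2) →ₗ[F2] (Fin n → F2)}

def liftCover (ι : (Fin m → F2) →ₗ[F2] (Fin n → F2))
    (H : Multiset (AffineSubspace F2 (Fin m → F2))) : Multiset (AffineSubspace F2 (Fin n → F2)) :=
  H.map fun S => S.map ι.toAffineMap

lemma covCount_liftCover_apply (hι : Injective ι) (H : Multiset (AffineSubspace F2 (Fin m → F2)))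
    (y : Fin m → F2) : covCount n (liftCover ι H) (ι y) = covCount m H y := by
  simp only [covCount, liftCover, Multiset.countP_map]
  rw [← Multiset.countP_eq_card_filter]
  exact Multiset.countP_congr rfl fun S _ =>
    propext (AffineSubspace.mem_map_iff_mem_of_injective (f := ι.toAffineMap) hι)

lemma finrank_direction_map_of_injective (hι : Injective ι) (S : AffineSubspace F2 (Fin m → F2)) :
    finrank F2 (S.map ι.toAffineMap).direction = finrank F2 S.direction := by
  rw [AffineSubspace.map_direction]
  exact (Submodule.equivMapOfInjective ι hι S.direction).finrank_eq.symm

end Lift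

theorem IsCoverExact.liftCover_add_fibreCover {m n k d d' s : ℕ}
    {H : Multiset (AffineSubspace F2 (Fin m → F2))} (hH : IsCoverExact m k d' s H)
    {ι : (Fin m → F2) →ₗ[F2] (Fin n → F2)} (hι : Injective ι)
    {M : Type*} [AddCommGroup M] [Module F2 M] [FiniteDimensional F2 M]
    {Φ : (Fin n → F2) →ₗ[F2] M} (hΦ : Surjective Φ) (hM : finrank F2 M = d)
    (hdim : m - d' = n - d) {T : Finset M} (hT : ∀ x, Φ x ∈ T ↔ x ∉ Set.range ι) :
    IsCoverExact n k d s (liftCover ι H + fibreCover hΦ k T) := by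
  obtain ⟨hdimH, hcovH, hzeroH⟩ := hH
  refine ⟨fun S hS => ?_, fun x hx => ?_, ?_⟩
  · rcases Multiset.mem_add.mp hS with hS | hS
    · obtain ⟨S', hS', rfl⟩ := Multiset.mem_map.mp hS
      obtain ⟨⟨p, hp⟩, hrank⟩ := hdimH S' hS'
      exact ⟨⟨ι p, AffineSubspace.mem_map_of_mem _ hp⟩,
        by rw [finrank_direction_map_of_injective hι, hrank, hdim]⟩
    · obtain ⟨w, rfl⟩ := mem_fibreCover hΦ hS
      exact ⟨fibre_nonempty hΦ w, by rw [finrank_direction_fibre, hM]⟩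
  · rw [covCount_add, covCount_fibreCover]
    by_cases hxι : x ∈ Set.range ι
    · obtain ⟨y, rfl⟩ := hxι
      rw [covCount_liftCover_apply hι]
      exact le_add_right (hcovH y fun hy => hx (by rw [hy, map_zero]))
    · rw [if_pos ((hT x).mpr hxι)]
      exact le_add_self
  · have h0 : Φ 0 ∉ T := by rw [hT, not_not]; exact ⟨0, map_zero ι⟩
    rw [covCount_add, covCount_fibreCover, if_neg h0, ← map_zero ι,
      covCount_liftCover_apply hι, hzeroH, add_zero]

lemma g_le_card {n k d s : ℕ} {H : Multiset (AffineSubspace F2 (Fin n → F2))}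
    (hH : IsCoverExact n k d s H) : g n k d s ≤ Multiset.card H :=
  Nat.sInf_le ⟨H, hH, rfl⟩

lemma exists_card_eq_g {n k d s : ℕ} (h : ∃ H, IsCoverExact n k d s H) :
    ∃ H, IsCoverExact n k d s H ∧ Multiset.card H = g n k d s :=
  let ⟨H, hH⟩ := h
  Nat.sInf_mem (s := {m | ∃ H, IsCoverExact n k d s H ∧ Multiset.card H = m}) ⟨_, H, hH, rfl⟩

theorem g_le_g_add_card_mul {m n k d d' s : ℕ} (hex : ∃ H, IsCoverExact m k d' s H)
    {ι : (Fin m → F2) →ₗ[F2] (Fin n → F2)} (hι : Injective ι)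
    {M : Type*} [AddCommGroup M] [Module F2 M] [FiniteDimensional F2 M]
    {Φ : (Fin n → F2) →ₗ[F2] M} (hΦ : Surjective Φ) (hM : finrank F2 M = d)
    (hdim : m - d' = n - d) {T : Finset M} (hT : ∀ x, Φ x ∈ T ↔ x ∉ Set.range ι) :
    g n k d s ≤ g m k d' s + T.card * k := by
  obtain ⟨H, hH, hcard⟩ := exists_card_eq_g hex
  calc g n k d s ≤ Multiset.card (liftCover ι H + fibreCover hΦ k T) :=
        g_le_card (hH.liftCover_add_fibreCover hι hΦ hM hdim hT)
    _ = g m k d' s + T.card * k := by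
        rw [Multiset.card_add, liftCover, Multiset.card_map, card_fibreCover, hcard]

lemma exists_isCoverExact_one {m : ℕ} (hm : 0 < m) (k s : ℕ) : ∃ H, IsCoverExact m k 1 s H := by
  let coord (i : Fin m) : (Fin m → F2) →ₗ[F2] F2 := LinearMap.proj i
  have hcoord (i : Fin m) : Surjective (coord i) := LinearMap.proj_surjective i
  let i₀ : Fin m := ⟨0, hm⟩
  refine ⟨∑ i, fibreCover (hcoord i) k {1} + fibreCover (hcoord i₀) s {0},
    fun S hS => ?_, fun x hx => ?_, ?_⟩
  · obtain ⟨i, hS⟩ : ∃ i, ∃ c, S = fibre (hcoord i) c := by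
      rcases Multiset.mem_add.mp hS with hS | hS
      · obtain ⟨i, -, hS⟩ := Multiset.mem_sum.mp hS
        exact ⟨i, mem_fibreCover _ hS⟩
      · exact ⟨i₀, mem_fibreCover _ hS⟩
    obtain ⟨c, rfl⟩ := hS
    exact ⟨fibre_nonempty (hcoord i) c, by rw [finrank_direction_fibre, finrank_self]⟩
  · obtain ⟨i, hi⟩ := Function.ne_iff.mp hx
    have hi1 : x i = 1 := Fin.eq_one_of_ne_zero (x i) hi
    rw [covCount_add, covCount_sum]
    refine le_add_right (le_trans ?_ (Finset.single_le_sum (fun j _ => Nat.zero_le _)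
      (Finset.mem_univ i)))
    rw [covCount_fibreCover]
    simp [coord, hi1]
  · simp [covCount_add, covCount_sum, covCount_fibreCover, coord]

lemma exists_embedding_and_fibration {n e : ℕ} (h : e + 1 ≤ n) :
    ∃ ι : (Fin (n - e) → F2) →ₗ[F2] (Fin n → F2), Injective ι ∧
    ∃ Φ : (Fin n → F2) →ₗ[F2] F2 × (Fin e → F2), Surjective Φ ∧
    ∃ T : Finset (F2 × (Fin e → F2)), T.card = 2 * (2 ^ e - 1) ∧
      ∀ x, Φ x ∈ T ↔ x ∉ Set.range ι := by
  let ψ : (Fin n → F2) →ₗ[F2] (Fin e → F2) :=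
    LinearMap.funLeft F2 F2 (Fin.castLE h ∘ Fin.succ)
  have hψ : Surjective ψ := LinearMap.funLeft_surjective_of_injective _ _ _
    ((Fin.castLE_injective h).comp (Fin.succ_injective e))
  have hker : finrank F2 (LinearMap.ker ψ) = n - e := by
    have := LinearMap.finrank_range_add_finrank_ker ψ
    rw [LinearMap.range_eq_top.mpr hψ, finrank_top, finrank_fin_fun, finrank_fin_fun] at this
    omega
  let ι := (LinearMap.ker ψ).subtype ∘ₗ
    (LinearEquiv.ofFinrankEq (Fin (n - e) → F2) (LinearMap.ker ψ)
      (by rw [finrank_fin_fun, hker])).toLinearMap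
  have hι : LinearMap.range ι = LinearMap.ker ψ := by
    rw [LinearMap.range_comp_of_range_eq_top _ (LinearEquiv.range _), Submodule.range_subtype]
  let Φ : (Fin n → F2) →ₗ[F2] F2 × (Fin e → F2) :=
    (Fin.consLinearEquiv F2 fun _ => F2).symm.toLinearMap ∘ₗ
      LinearMap.funLeft F2 F2 (Fin.castLE h)
  have hΦ : Surjective Φ := (LinearEquiv.surjective (Fin.consLinearEquiv F2 _).symm).comp
    (LinearMap.funLeft_surjective_of_injective _ _ _ (Fin.castLE_injective h))
  refine ⟨ι, (Submodule.injective_subtype _).comp (LinearEquiv.injective _), Φ, hΦ,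
    Finset.univ ×ˢ {0}ᶜ, ?_, fun x => ?_⟩
  · simp [Finset.card_compl, ZMod.card]
  · rw [← LinearMap.coe_range, hι]
    simp only [Finset.mem_product, Finset.mem_univ, true_and, Finset.mem_compl,
      Finset.mem_singleton, SetLike.mem_coe, LinearMap.mem_ker]
    rfl

theorem stmt4_general (n k d s : ℕ) (hd : 2 ≤ d) (hdn : d ≤ n) :
    g n k d s ≤ g (n - d + 1) k 1 s + 2 * k * (2 ^ (d - 1) - 1) := by
  obtain ⟨e, rfl⟩ : ∃ e, d = e + 1 := ⟨d - 1, by omega⟩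
  obtain ⟨ι, hι, Φ, hΦ, T, hTcard, hT⟩ := exists_embedding_and_fibration hdn
  have hM : finrank F2 (F2 × (Fin e → F2)) = e + 1 := by
    rw [finrank_prod, finrank_self, finrank_fin_fun, add_comm]
  calc g n k (e + 1) s ≤ g (n - e) k 1 s + T.card * k :=
        g_le_g_add_card_mul (exists_isCoverExact_one (by omega) k s) hι hΦ hM (by omega) hT
    _ = g (n - (e + 1) + 1) k 1 s + 2 * k * (2 ^ (e + 1 - 1) - 1) := by
        rw [hTcard, show n - (e + 1) + 1 = n - e by omega, Nat.add_sub_cancel]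
        ring

theorem stmt4 (n k d s : ℕ) (hd : 2 ≤ d) (hdn : d ≤ n) (hs : s < k) :
    g n k d s ≤ g (n - d + 1) k 1 s + 2 * k * (2 ^ (d - 1) - 1) :=
  stmt4_general n k d s hd hdn
end
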